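/- arXiv:2303.15679 — 5 statements merged into one kernel-verified Lean document; each statement's English description precedes it below -/
import Mathlib

section
/- If T : H → H is nonexpansive on a Hilbert space and has a fixed point, then for any ρ ∈ (0,1), the Mann iteration v_{k+1} = (1-ρ) v_k + ρ T(v_k) converges (weakly) to a fixed point of T. -/
/-!
For a fixed point `q`, expanding `‖(1 - ρ) • (x - q) + ρ • (T x - q)‖ ^ 2` shows that each Mann step
decreases `‖v k - q‖ ^ 2` by at least `ρ (1 - ρ) ‖v k - T (v k)‖ ^ 2`. Hence the distances to every
fixed point converge and `v k - T (v k) → 0`. The bounded sequence `v` has weak cluster points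
(Banach–Alaoglu); each is a fixed point by demiclosedness of `id - T`, and two of them `p`, `q`
coincide because `⟪v k, p - q⟫` converges (Opial's lemma). Ultrafilters finer than `atTop` play
the role of subsequences.
-/

open Filter Topology Function Bornology Set
open scoped RealInnerProductSpace

theorem isBounded_range_of_tendsto_norm_sub {E : Type*} [SeminormedAddCommGroup E] {v : ℕ → E}
    {q : E} {L : ℝ} (h : Tendsto (fun k => ‖v k - q‖) atTop (𝓝 L)) : IsBounded (range v) := by
  obtain ⟨C, hC⟩ := h.bddAbove_range
  refine isBounded_iff_forall_norm_le.mpr ⟨C + ‖q‖, ?_⟩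
  rintro _ ⟨k, rfl⟩
  calc ‖v k‖ = ‖(v k - q) + q‖ := by rw [sub_add_cancel]
    _ ≤ ‖v k - q‖ + ‖q‖ := norm_add_le _ _
    _ ≤ C + ‖q‖ := by gcongr; exact hC (mem_range_self k)

section

variable {H : Type*} [NormedAddCommGroup H] [InnerProductSpace ℝ H] {α : Type*}

def WeakTendsto (v : α → H) (l : Filter α) (p : H) : Prop :=
  ∀ y, Tendsto (fun a => ⟪v a, y⟫) l (𝓝 ⟪p, y⟫)

/-- Banach–Alaoglu, transported to `H` by the Riesz representation `InnerProductSpace.toDual`. -/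
theorem exists_weakTendsto_of_isBounded [CompleteSpace H] {v : α → H}
    (hv : IsBounded (range v)) (U : Ultrafilter α) : ∃ p, WeakTendsto v U p := by
  obtain ⟨R, hR⟩ := isBounded_iff_forall_norm_le.mp hv
  let Φ : α → WeakDual ℝ H := fun a => StrongDual.toWeakDual (InnerProductSpace.toDual ℝ H (v a))
  have hΦ : ∀ a, Φ a ∈ WeakDual.toStrongDual ⁻¹' Metric.closedBall 0 R := fun a => by
    simpa [Φ] using hR (v a) (mem_range_self a)
  obtain ⟨P, -, hP⟩ := (WeakDual.isCompact_closedBall (0 : StrongDual ℝ H) R).ultrafilter_le_nhds'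
    (U.map Φ) (Ultrafilter.mem_map.mpr (univ_mem' hΦ))
  refine ⟨(InnerProductSpace.toDual ℝ H).symm (WeakDual.toStrongDual P), fun y => ?_⟩
  rw [InnerProductSpace.toDual_symm_apply]
  exact ((WeakDual.eval_continuous y).tendsto P).comp hP

/-- Along `l`, `⟪v a, p - q⟫` is a combination of `‖v a - p‖ ^ 2` and `‖v a - q‖ ^ 2`, so it
converges; its limit is both `⟪p, p - q⟫` and `⟪q, p - q⟫`. -/
theorem WeakTendsto.eq_of_tendsto_norm_sub {v : α → H} {l G₁ G₂ : Filter α} [G₁.NeBot]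
    [G₂.NeBot] {p q : H} {Lp Lq : ℝ} (hp : WeakTendsto v G₁ p) (hq : WeakTendsto v G₂ q)
    (h₁ : G₁ ≤ l) (h₂ : G₂ ≤ l) (hLp : Tendsto (fun a => ‖v a - p‖) l (𝓝 Lp))
    (hLq : Tendsto (fun a => ‖v a - q‖) l (𝓝 Lq)) : p = q := by
  have hinner : ∀ a, ⟪v a, p - q⟫ = (‖v a - q‖ ^ 2 - ‖v a - p‖ ^ 2 + ‖p‖ ^ 2 - ‖q‖ ^ 2) / 2 := by
    intro a
    rw [inner_sub_right, norm_sub_sq_real, norm_sub_sq_real]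
    ring
  have hlim : Tendsto (fun a => ⟪v a, p - q⟫) l
      (𝓝 ((Lq ^ 2 - Lp ^ 2 + ‖p‖ ^ 2 - ‖q‖ ^ 2) / 2)) := by
    simp_rw [hinner]
    exact ((((hLq.pow 2).sub (hLp.pow 2)).add_const _).sub_const _).div_const 2
  have hpC := tendsto_nhds_unique (hp (p - q)) (hlim.mono_left h₁)
  have hqC := tendsto_nhds_unique (hq (p - q)) (hlim.mono_left h₂)
  rw [← sub_eq_zero, ← inner_self_eq_zero (𝕜 := ℝ), inner_sub_left, hpC, hqC, sub_self]

theorem exists_mem_weakTendsto_of_tendsto_norm_sub [CompleteSpace H] {v : ℕ → H} {F : Set H}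
    (hF : F.Nonempty) (hdist : ∀ q ∈ F, ∃ L, Tendsto (fun k => ‖v k - q‖) atTop (𝓝 L))
    (hcluster : ∀ (G : Filter ℕ) [G.NeBot] (p : H), G ≤ atTop → WeakTendsto v G p → p ∈ F) :
    ∃ p ∈ F, WeakTendsto v atTop p := by
  obtain ⟨z, hz⟩ := hF
  obtain ⟨Lz, hLz⟩ := hdist z hz
  have hbdd : IsBounded (range v) := isBounded_range_of_tendsto_norm_sub hLz
  have hlimit : ∀ U : Ultrafilter ℕ, (U : Filter ℕ) ≤ atTop → ∃ p ∈ F, WeakTendsto v U p :=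
    fun U hU => by
      obtain ⟨p, hp⟩ := exists_weakTendsto_of_isBounded hbdd U
      exact ⟨p, hcluster U p hU hp, hp⟩
  obtain ⟨p, hpF, hp⟩ := hlimit (Ultrafilter.of atTop) (Ultrafilter.of_le atTop)
  refine ⟨p, hpF, fun y => (tendsto_iff_ultrafilter _ _ _).mpr fun U hU => ?_⟩
  obtain ⟨q, hqF, hq⟩ := hlimit U hU
  obtain ⟨Lp, hLp⟩ := hdist p hpF
  obtain ⟨Lq, hLq⟩ := hdist q hqF
  rw [← hq.eq_of_tendsto_norm_sub hp hU (Ultrafilter.of_le atTop) hLq hLp]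
  exact hq y

/-- Demiclosedness of `id - T`: with `ε a = ‖v a - T (v a)‖`, expanding `‖v a - T p‖ ^ 2` around
`p` gives `‖p - T p‖ ^ 2 ≤ ε a ^ 2 + 2 ε a ‖v a - p‖ - 2 ⟪v a - p, p - T p⟫`, whose right side tends
to `0`. -/
theorem LipschitzWith.isFixedPt_of_weakTendsto {T : H → H} (hT : LipschitzWith 1 T) {v : α → H}
    {G : Filter α} [G.NeBot] {p : H} (hbdd : IsBounded (range v)) (hp : WeakTendsto v G p)
    (hreg : Tendsto (fun a => ‖v a - T (v a)‖) G (𝓝 0)) : IsFixedPt T p := by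
  set ε := fun a => ‖v a - T (v a)‖
  have hle : ∀ a, ‖p - T p‖ ^ 2 ≤ ε a ^ 2 + 2 * (ε a * ‖v a - p‖) - 2 * ⟪v a - p, p - T p⟫ := by
    intro a
    have hTp : ‖v a - T p‖ ≤ ε a + ‖v a - p‖ := calc
      ‖v a - T p‖ = ‖(v a - T (v a)) + (T (v a) - T p)‖ := by rw [sub_add_sub_cancel]
      _ ≤ ε a + ‖T (v a) - T p‖ := norm_add_le _ _
      _ ≤ ε a + ‖v a - p‖ := by gcongr; simpa using hT.norm_sub_le (v a) p
    have hexp : ‖v a - T p‖ ^ 2 = ‖v a - p‖ ^ 2 + 2 * ⟪v a - p, p - T p⟫ + ‖p - T p‖ ^ 2 := by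
      rw [← norm_add_sq_real, sub_add_sub_cancel]
    nlinarith [norm_nonneg (v a - T p)]
  have hdist_bdd : IsBoundedUnder (· ≤ ·) G (norm ∘ fun a => ‖v a - p‖) := by
    obtain ⟨C, hC⟩ := isBounded_iff_forall_norm_le.mp hbdd
    refine isBoundedUnder_of ⟨C + ‖p‖, fun a => ?_⟩
    simpa only [comp_apply, norm_norm] using
      (_root_.norm_sub_le _ _).trans (add_le_add_left (hC _ (mem_range_self a)) _)
  have hinner : Tendsto (fun a => ⟪v a - p, p - T p⟫) G (𝓝 0) := by
    simp_rw [inner_sub_left]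
    simpa using (hp (p - T p)).sub_const ⟪p, p - T p⟫
  have hrhs : Tendsto (fun a => ε a ^ 2 + 2 * (ε a * ‖v a - p‖) - 2 * ⟪v a - p, p - T p⟫) G
      (𝓝 0) := by
    simpa using ((hreg.pow 2).add ((hreg.zero_mul_isBoundedUnder_le hdist_bdd).const_mul 2)).sub
      (hinner.const_mul 2)
  have hnorm : ‖p - T p‖ ^ 2 ≤ 0 := ge_of_tendsto' hrhs hle
  exact (sub_eq_zero.mp (norm_eq_zero.mp (by nlinarith [norm_nonneg (p - T p)]))).symm

theorem norm_one_sub_smul_add_smul_sq (ρ : ℝ) (x y : H) :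
    ‖(1 - ρ) • x + ρ • y‖ ^ 2 = (1 - ρ) * ‖x‖ ^ 2 + ρ * ‖y‖ ^ 2 - ρ * (1 - ρ) * ‖x - y‖ ^ 2 := by
  rw [norm_add_sq_real, norm_sub_sq_real, norm_smul, norm_smul, real_inner_smul_left,
    real_inner_smul_right, Real.norm_eq_abs, Real.norm_eq_abs, mul_pow, mul_pow, sq_abs, sq_abs]
  ring

theorem LipschitzWith.norm_one_sub_smul_add_smul_apply_sub_sq_le {T : H → H}
    (hT : LipschitzWith 1 T) {q : H} (hq : IsFixedPt T q) {ρ : ℝ} (hρ : 0 ≤ ρ) (x : H) :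
    ‖(1 - ρ) • x + ρ • T x - q‖ ^ 2 ≤ ‖x - q‖ ^ 2 - ρ * (1 - ρ) * ‖x - T x‖ ^ 2 := by
  have hTx : ‖T x - q‖ ^ 2 ≤ ‖x - q‖ ^ 2 := by
    gcongr
    simpa [hq.eq] using hT.norm_sub_le x q
  have hsplit : (1 - ρ) • x + ρ • T x - q = (1 - ρ) • (x - q) + ρ • (T x - q) := by module
  rw [hsplit, norm_one_sub_smul_add_smul_sq, sub_sub_sub_cancel_right]
  nlinarith

section Mann

variable {T : H → H} {ρ : ℝ} {v : ℕ → H}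

theorem exists_tendsto_norm_sub_of_mann (hT : LipschitzWith 1 T) (hρ : ρ ∈ Icc (0 : ℝ) 1)
    (hv : ∀ k, v (k + 1) = (1 - ρ) • v k + ρ • T (v k)) {q : H} (hq : IsFixedPt T q) :
    ∃ L, Tendsto (fun k => ‖v k - q‖) atTop (𝓝 L) := by
  have hanti : Antitone fun k => ‖v k - q‖ := antitone_nat_of_succ_le fun k => by
    have hstep := hT.norm_one_sub_smul_add_smul_apply_sub_sq_le hq hρ.1 (v k)
    rw [← hv k] at hstep
    have : 0 ≤ ρ * (1 - ρ) * ‖v k - T (v k)‖ ^ 2 :=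
      mul_nonneg (mul_nonneg hρ.1 (sub_nonneg.mpr hρ.2)) (sq_nonneg _)
    exact (pow_le_pow_iff_left₀ (norm_nonneg _) (norm_nonneg _) two_ne_zero).mp (by linarith)
  exact ⟨_, tendsto_atTop_ciInf hanti ⟨0, by rintro _ ⟨k, rfl⟩; exact norm_nonneg _⟩⟩

/-- Asymptotic regularity: `ρ (1 - ρ) ‖v k - T (v k)‖ ^ 2` is bounded by the decrease of
`‖v k - z‖ ^ 2`, which tends to `0`. -/
theorem tendsto_norm_sub_apply_of_mann (hT : LipschitzWith 1 T) (hρ : ρ ∈ Ioo (0 : ℝ) 1)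
    (hv : ∀ k, v (k + 1) = (1 - ρ) • v k + ρ • T (v k)) {z : H} (hz : IsFixedPt T z) :
    Tendsto (fun k => ‖v k - T (v k)‖) atTop (𝓝 0) := by
  obtain ⟨L, hL⟩ := exists_tendsto_norm_sub_of_mann hT (Ioo_subset_Icc_self hρ) hv hz
  have hc : 0 < ρ * (1 - ρ) := mul_pos hρ.1 (sub_pos.mpr hρ.2)
  have hdecrease : Tendsto (fun k => (‖v k - z‖ ^ 2 - ‖v (k + 1) - z‖ ^ 2) / (ρ * (1 - ρ))) atTop
      (𝓝 0) := by
    simpa using ((hL.pow 2).sub ((hL.pow 2).comp (tendsto_add_atTop_nat 1))).div_const _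
  have hsq : Tendsto (fun k => ‖v k - T (v k)‖ ^ 2) atTop (𝓝 0) := by
    refine squeeze_zero (fun k => sq_nonneg _) (fun k => ?_) hdecrease
    rw [le_div_iff₀ hc, hv k]
    linarith [hT.norm_one_sub_smul_add_smul_apply_sub_sq_le hz hρ.1.le (v k)]
  simpa [Real.sqrt_sq (norm_nonneg _)] using hsq.sqrt

end Mann

end

theorem mann_iteration_weak_convergence
    (H : Type*) [NormedAddCommGroup H] [InnerProductSpace ℝ H] [CompleteSpace H]
    (T : H → H) (hT : ∀ x y, ‖T x - T y‖ ≤ ‖x - y‖)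
    (hfix : ∃ z, T z = z)
    (ρ : ℝ) (hρ : ρ ∈ Set.Ioo (0 : ℝ) 1)
    (v : ℕ → H)
    (hv : ∀ k, v (k + 1) = (1 - ρ) • v k + ρ • T (v k)) :
    ∃ p, T p = p ∧
      ∀ w : H, Filter.Tendsto (fun k => (inner ℝ (v k) w : ℝ)) Filter.atTop
        (nhds (inner ℝ p w : ℝ)) := by
  have hlip : LipschitzWith 1 T := .of_dist_le_mul fun x y => by simpa [dist_eq_norm] using hT x y
  obtain ⟨z, hz⟩ := hfix
  have hdist : ∀ q ∈ fixedPoints T, ∃ L, Tendsto (fun k => ‖v k - q‖) atTop (𝓝 L) :=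
    fun q hq => exists_tendsto_norm_sub_of_mann hlip (Ioo_subset_Icc_self hρ) hv hq
  obtain ⟨Lz, hLz⟩ := hdist z hz
  have hreg := tendsto_norm_sub_apply_of_mann hlip hρ hv hz
  exact exists_mem_weakTendsto_of_tendsto_norm_sub ⟨z, hz⟩ hdist fun G _ p hG hp =>
    hlip.isFixedPt_of_weakTendsto (isBounded_range_of_tendsto_norm_sub hLz) hp (hreg.mono_left hG)
end

section
/- Let F_j be the proximal map of a convex differentiable function f_j with parameter σ² for j = 0,...,J-1, and suppose each v_j* satisfies F_j(v_j*) = P_j x* where x* = x̄(v*) = Λ^{-1} Σ_j P_j^T W v_j*. Then Σ_j P_j^T W ∇f_j(P_j x*) = 0. -/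
/-!
At a minimiser `u` of `f + ‖· - v‖² / c` Fermat's rule gives `∇f(u) = (2 / c) (v - u)`.
Applied to `u = F_j(v_j) = P_j x*` this turns `Σ_j P_jᵀ W ∇f_j(P_j x*)` into
`(2 / c) (Σ_j P_jᵀ W v_j - Λ x*)` with `c = 2σ²`, which vanishes because `x* = x̄(v*)`.
-/

open ContinuousLinearMap InnerProductSpace

section Gradient

variable {E : Type*} [NormedAddCommGroup E] [InnerProductSpace ℝ E] [CompleteSpace E]
  {f g : E → ℝ} {f' g' u v : E}

theorem HasGradientAt.add (hf : HasGradientAt f f' u) (hg : HasGradientAt g g' u) :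
    HasGradientAt (fun w => f w + g w) (f' + g') u := by
  rw [hasGradientAt_iff_hasFDerivAt, map_add]
  exact hf.hasFDerivAt.add hg.hasFDerivAt

theorem hasGradientAt_norm_sub_sq_div (v u : E) (c : ℝ) :
    HasGradientAt (fun w => ‖w - v‖ ^ 2 / c) ((2 / c) • (u - v)) u := by
  rw [hasGradientAt_iff_hasFDerivAt]
  have h : HasFDerivAt (fun w => ‖w - v‖ ^ 2 / c) (c⁻¹ • 2 • innerSL ℝ (u - v)) u := by
    simp_rw [div_eq_inv_mul]
    exact ((hasFDerivAt_id u).sub_const v).norm_sq.const_mul c⁻¹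
  refine h.congr_fderiv ?_
  ext w
  simp only [map_sub, smul_apply, sub_apply, coe_innerSL_apply, nsmul_eq_mul, Nat.cast_ofNat,
    smul_eq_mul, map_smul, toDual_apply_apply]
  ring

theorem IsLocalMin.hasGradientAt_eq_zero (h : IsLocalMin f u) (hf : HasGradientAt f f' u) :
    f' = 0 :=
  (toDual ℝ E).injective <| by simpa using h.hasFDerivAt_eq_zero hf.hasFDerivAt

theorem HasGradientAt.eq_smul_sub_of_isLocalMin_add_norm_sub_sq_div (hf : HasGradientAt f f' u)
    {c : ℝ} (hmin : IsLocalMin (fun w => f w + ‖w - v‖ ^ 2 / c) u) :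
    f' = (2 / c) • (v - u) := by
  have h := hmin.hasGradientAt_eq_zero (hf.add (hasGradientAt_norm_sub_sq_div v u c))
  rwa [← neg_sub, smul_neg, add_neg_eq_zero] at h

end Gradient

theorem pmace_solution_gives_zero_vector_field_general
    (J N n : ℕ)
    (P : Fin J → (EuclideanSpace ℝ (Fin N) →L[ℝ] EuclideanSpace ℝ (Fin n)))
    (W : EuclideanSpace ℝ (Fin n) →L[ℝ] EuclideanSpace ℝ (Fin n))
    (Λ : EuclideanSpace ℝ (Fin N) →L[ℝ] EuclideanSpace ℝ (Fin N))
    (hΛ : ∀ x, Λ x = ∑ j, (ContinuousLinearMap.adjoint (P j)) (W (P j x)))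
    (f : Fin J → EuclideanSpace ℝ (Fin n) → ℝ)
    (g : Fin J → EuclideanSpace ℝ (Fin n) → EuclideanSpace ℝ (Fin n))
    (hg : ∀ j x, HasGradientAt (f j) (g j x) x)
    (σ : ℝ)
    (F : Fin J → EuclideanSpace ℝ (Fin n) → EuclideanSpace ℝ (Fin n))
    (hF : ∀ j v u, f j (F j v) + ‖F j v - v‖ ^ 2 / (2 * σ ^ 2)
            ≤ f j u + ‖u - v‖ ^ 2 / (2 * σ ^ 2))
    (v : Fin J → EuclideanSpace ℝ (Fin n))
    (xs : EuclideanSpace ℝ (Fin N))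
    (hxs : Λ xs = ∑ j, (ContinuousLinearMap.adjoint (P j)) (W (v j)))
    (hFv : ∀ j, F j (v j) = P j xs) :
    ∑ j, (ContinuousLinearMap.adjoint (P j)) (W (g j (P j xs))) = 0 := by
  set c := 2 * σ ^ 2
  have hgrad : ∀ j, g j (P j xs) = (2 / c) • (v j - P j xs) := fun j =>
    (hg j _).eq_smul_sub_of_isLocalMin_add_norm_sub_sq_div <|
      Filter.Eventually.of_forall fun u => hFv j ▸ hF j (v j) u
  calc ∑ j, (adjoint (P j)) (W (g j (P j xs)))
      = (2 / c) • (∑ j, (adjoint (P j)) (W (v j)) - Λ xs) := by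
        simp only [hgrad, hΛ, map_smul, map_sub, Finset.smul_sum, smul_sub, Finset.sum_sub_distrib]
    _ = 0 := by rw [hxs, sub_self, smul_zero]

theorem pmace_solution_gives_zero_vector_field
    (J N n : ℕ)
    (P : Fin J → (EuclideanSpace ℝ (Fin N) →L[ℝ] EuclideanSpace ℝ (Fin n)))
    (hP : ∀ j, (P j).comp (ContinuousLinearMap.adjoint (P j)) = ContinuousLinearMap.id ℝ _)
    (W : EuclideanSpace ℝ (Fin n) →L[ℝ] EuclideanSpace ℝ (Fin n))
    (hWsa : IsSelfAdjoint W)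
    (hWpos : ∀ x : EuclideanSpace ℝ (Fin n), x ≠ 0 → (0 : ℝ) < inner ℝ (W x) x)
    (Λ : EuclideanSpace ℝ (Fin N) →L[ℝ] EuclideanSpace ℝ (Fin N))
    (hΛ : ∀ x, Λ x = ∑ j, (ContinuousLinearMap.adjoint (P j)) (W (P j x)))
    (hΛbij : Function.Bijective Λ)
    (f : Fin J → EuclideanSpace ℝ (Fin n) → ℝ)
    (hconv : ∀ j, ConvexOn ℝ Set.univ (f j))
    (g : Fin J → EuclideanSpace ℝ (Fin n) → EuclideanSpace ℝ (Fin n))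
    (hg : ∀ j x, HasGradientAt (f j) (g j x) x)
    (σ : ℝ) (hσ : 0 < σ)
    (F : Fin J → EuclideanSpace ℝ (Fin n) → EuclideanSpace ℝ (Fin n))
    (hF : ∀ j v u, f j (F j v) + ‖F j v - v‖ ^ 2 / (2 * σ ^ 2)
            ≤ f j u + ‖u - v‖ ^ 2 / (2 * σ ^ 2))
    (v : Fin J → EuclideanSpace ℝ (Fin n))
    (xs : EuclideanSpace ℝ (Fin N))
    (hxs : Λ xs = ∑ j, (ContinuousLinearMap.adjoint (P j)) (W (v j)))
    (hFv : ∀ j, F j (v j) = P j xs) :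
    ∑ j, (ContinuousLinearMap.adjoint (P j)) (W (g j (P j xs))) = 0 :=
  pmace_solution_gives_zero_vector_field_general J N n P W Λ hΛ f g hg σ F hF v xs hxs hFv
end

section
/- Conversely, if x* satisfies Σ_j P_j^T W ∇f_j(P_j x*) = 0, then setting v_j* = P_j x* + σ² ∇f_j(P_j x*) for each j yields F_j(v_j*) = P_j x* for all j and x̄(v*) = x*, so v* is a PMACE solution. -/
/-!
Convexity makes `x` the unique minimiser of the proximal objective
`u ↦ f u + ‖u - (x + t ∇f x)‖² / (2t)`: expanding the square, the objective at `u` exceeds the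
one at `x` by `f u - f x - ⟪∇f x, u - x⟫ + ‖u - x‖² / (2t)`, and the first three terms together are
nonnegative by the gradient inequality. Hence `F_j (v_j*) = P_j x*`, and
`Σ P_jᵀ W v_j* = Λ x* + σ² Σ P_jᵀ W ∇f_j(P_j x*) = Λ x*`.
-/

open Set

section Prox

variable {E : Type*} [NormedAddCommGroup E] [InnerProductSpace ℝ E] [CompleteSpace E]
  {f : E → ℝ} {x g : E}

theorem ConvexOn.add_inner_sub_le_of_hasGradientAt (hf : ConvexOn ℝ univ f)
    (hg : HasGradientAt f g x) (y : E) : f x + inner ℝ g (y - x) ≤ f y := by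
  set ℓ : ℝ →ᵃ[ℝ] E := AffineMap.lineMap x y
  have hderiv : HasDerivAt (f ∘ ℓ) (inner ℝ g (y - x)) 0 := by
    have hf' : HasFDerivAt f (InnerProductSpace.toDual ℝ E g) (ℓ 0) := by
      simpa [ℓ] using hg.hasFDerivAt
    simpa using hf'.comp_hasDerivAt (0 : ℝ) AffineMap.hasDerivAt_lineMap
  have hslope := (hf.comp_affineMap ℓ).le_slope_of_hasDerivAt (mem_univ 0) (mem_univ 1)
    zero_lt_one hderiv
  simp only [slope, Function.comp_apply, ℓ, AffineMap.lineMap_apply_one,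
    AffineMap.lineMap_apply_zero, sub_zero, inv_one, vsub_eq_sub, one_smul] at hslope
  linarith

theorem ConvexOn.eq_of_prox_le_of_hasGradientAt (hf : ConvexOn ℝ univ f)
    (hg : HasGradientAt f g x) {t : ℝ} (ht : 0 < t) {u : E}
    (hu : f u + ‖u - (x + t • g)‖ ^ 2 / (2 * t) ≤ f x + ‖x - (x + t • g)‖ ^ 2 / (2 * t)) :
    u = x := by
  have hu_sq : ‖u - (x + t • g)‖ ^ 2
      = ‖u - x‖ ^ 2 - 2 * t * inner ℝ g (u - x) + t ^ 2 * ‖g‖ ^ 2 := by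
    rw [show u - (x + t • g) = (u - x) - t • g by abel, norm_sub_sq_real, real_inner_smul_right,
      real_inner_comm, norm_smul, mul_pow, Real.norm_eq_abs, sq_abs]
    ring
  have hx_sq : ‖x - (x + t • g)‖ ^ 2 = t ^ 2 * ‖g‖ ^ 2 := by
    rw [sub_add_cancel_left, norm_neg, norm_smul, mul_pow, Real.norm_eq_abs, sq_abs]
  have hsplit : (‖u - x‖ ^ 2 - 2 * t * inner ℝ g (u - x) + t ^ 2 * ‖g‖ ^ 2) / (2 * t)
      = ‖u - x‖ ^ 2 / (2 * t) - inner ℝ g (u - x) + t ^ 2 * ‖g‖ ^ 2 / (2 * t) := by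
    field_simp
  rw [hu_sq, hx_sq, hsplit] at hu
  have hgrad := hf.add_inner_sub_le_of_hasGradientAt hg u
  have hnorm : ‖u - x‖ ^ 2 / (2 * t) ≤ 0 := by linarith
  rw [div_le_iff₀ (by positivity), zero_mul] at hnorm
  simpa [sub_eq_zero] using le_antisymm hnorm (sq_nonneg _)

end Prox

theorem zero_vector_field_gives_pmace_solution_general
    (J N n : ℕ)
    (P : Fin J → (EuclideanSpace ℝ (Fin N) →L[ℝ] EuclideanSpace ℝ (Fin n)))
    (W : EuclideanSpace ℝ (Fin n) →L[ℝ] EuclideanSpace ℝ (Fin n))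
    (Λ : EuclideanSpace ℝ (Fin N) →L[ℝ] EuclideanSpace ℝ (Fin N))
    (hΛ : ∀ x, Λ x = ∑ j, (ContinuousLinearMap.adjoint (P j)) (W (P j x)))
    (f : Fin J → EuclideanSpace ℝ (Fin n) → ℝ)
    (hconv : ∀ j, ConvexOn ℝ Set.univ (f j))
    (g : Fin J → EuclideanSpace ℝ (Fin n) → EuclideanSpace ℝ (Fin n))
    (hg : ∀ j x, HasGradientAt (f j) (g j x) x)
    (σ : ℝ) (hσ : 0 < σ)
    (F : Fin J → EuclideanSpace ℝ (Fin n) → EuclideanSpace ℝ (Fin n))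
    (hF : ∀ j v u, f j (F j v) + ‖F j v - v‖ ^ 2 / (2 * σ ^ 2)
            ≤ f j u + ‖u - v‖ ^ 2 / (2 * σ ^ 2))
    (xs : EuclideanSpace ℝ (Fin N))
    (hzero : ∑ j, (ContinuousLinearMap.adjoint (P j)) (W (g j (P j xs))) = 0)
    (v : Fin J → EuclideanSpace ℝ (Fin n))
    (hv : ∀ j, v j = P j xs + σ ^ 2 • g j (P j xs)) :
    (∀ j, F j (v j) = P j xs) ∧
      Λ xs = ∑ j, (ContinuousLinearMap.adjoint (P j)) (W (v j)) := by
  refine ⟨fun j => ?_, ?_⟩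
  · have hprox := hF j (v j) (P j xs)
    rw [hv j] at hprox ⊢
    exact (hconv j).eq_of_prox_le_of_hasGradientAt (hg j _) (by positivity) hprox
  · simp only [hv, map_add, map_smul, Finset.sum_add_distrib, ← Finset.smul_sum, hzero,
      smul_zero, add_zero, hΛ]

theorem zero_vector_field_gives_pmace_solution
    (J N n : ℕ)
    (P : Fin J → (EuclideanSpace ℝ (Fin N) →L[ℝ] EuclideanSpace ℝ (Fin n)))
    (hP : ∀ j, (P j).comp (ContinuousLinearMap.adjoint (P j)) = ContinuousLinearMap.id ℝ _)
    (W : EuclideanSpace ℝ (Fin n) →L[ℝ] EuclideanSpace ℝ (Fin n))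
    (hWsa : IsSelfAdjoint W)
    (hWpos : ∀ x : EuclideanSpace ℝ (Fin n), x ≠ 0 → (0 : ℝ) < inner ℝ (W x) x)
    (Λ : EuclideanSpace ℝ (Fin N) →L[ℝ] EuclideanSpace ℝ (Fin N))
    (hΛ : ∀ x, Λ x = ∑ j, (ContinuousLinearMap.adjoint (P j)) (W (P j x)))
    (hΛbij : Function.Bijective Λ)
    (f : Fin J → EuclideanSpace ℝ (Fin n) → ℝ)
    (hconv : ∀ j, ConvexOn ℝ Set.univ (f j))
    (g : Fin J → EuclideanSpace ℝ (Fin n) → EuclideanSpace ℝ (Fin n))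
    (hg : ∀ j x, HasGradientAt (f j) (g j x) x)
    (σ : ℝ) (hσ : 0 < σ)
    (F : Fin J → EuclideanSpace ℝ (Fin n) → EuclideanSpace ℝ (Fin n))
    (hF : ∀ j v u, f j (F j v) + ‖F j v - v‖ ^ 2 / (2 * σ ^ 2)
            ≤ f j u + ‖u - v‖ ^ 2 / (2 * σ ^ 2))
    (xs : EuclideanSpace ℝ (Fin N))
    (hzero : ∑ j, (ContinuousLinearMap.adjoint (P j)) (W (g j (P j xs))) = 0)
    (v : Fin J → EuclideanSpace ℝ (Fin n))
    (hv : ∀ j, v j = P j xs + σ ^ 2 • g j (P j xs)) :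
    (∀ j, F j (v j) = P j xs) ∧
      Λ xs = ∑ j, (ContinuousLinearMap.adjoint (P j)) (W (v j)) :=
  zero_vector_field_gives_pmace_solution_general J N n P W Λ hΛ f hconv g hg σ hσ F hF xs hzero v hv
end

section
/- The PMACE ptychography data-fitting operator is invertible: for 0 < α < 1 and y_j ≥ 0 componentwise, the map v ↦ (1-α) v + α D^{-1} F* ( y_j ⊙ (F D v)/|F D v| ), where F is a unitary (discrete Fourier) transform and D an invertible diagonal matrix, is injective on vectors v for which F D v has all nonzero entries. -/
open Matrix

/-!
Write `L v = F (D v)`. Since `F F* = 1`, the agent is conjugate under `L` to the coordinatewise map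
`w ↦ (1 - α) w + α y ⊙ w / |w|`, which only rescales each coordinate `w_k` by the positive factor
`1 - α + α y_k / |w_k|`. That factor is read off the modulus `(1 - α) |w_k| + α y_k` of the image,
so the coordinatewise map is injective on vectors with nonzero entries, and `L` is injective because
`F` and `D` are invertible.
-/

theorem injOn_smul_add_smul_inv_norm_smul {E : Type*} [NormedAddCommGroup E] [NormedSpace ℝ E]
    {a b : ℝ} (ha : 0 < a) (hb : 0 ≤ b) :
    Set.InjOn (fun z : E => a • z + b • ‖z‖⁻¹ • z) {z | z ≠ 0} := by
  have scale (z : E) : a • z + b • ‖z‖⁻¹ • z = (a + b * ‖z‖⁻¹) • z := by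
    rw [smul_smul, add_smul]
  have norm_scale {z : E} (hz : z ≠ 0) : ‖(a + b * ‖z‖⁻¹) • z‖ = a * ‖z‖ + b := by
    rw [norm_smul_of_nonneg (by positivity), add_mul, mul_assoc,
      inv_mul_cancel₀ (norm_ne_zero_iff.2 hz), mul_one]
  intro z₁ hz₁ z₂ hz₂ h
  simp only [scale] at h
  have hnorm : ‖z₁‖ = ‖z₂‖ := by
    have h' := congrArg norm h
    rw [norm_scale hz₁, norm_scale hz₂] at h'
    exact mul_left_cancel₀ ha.ne' (by linarith)
  rw [hnorm] at h
  exact smul_right_injective E (by positivity : a + b * ‖z₂‖⁻¹ ≠ 0) h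

theorem Complex.injOn_ofReal_mul_add_ofReal_mul_div_norm {a b : ℝ} (ha : 0 < a) (hb : 0 ≤ b) :
    Set.InjOn (fun z : ℂ => (a : ℂ) * z + (b : ℂ) * (z / (‖z‖ : ℂ))) {z | z ≠ 0} := by
  convert injOn_smul_add_smul_inv_norm_smul (E := ℂ) ha hb using 2 with z
  simp only [Complex.real_smul, Complex.ofReal_inv, div_eq_inv_mul]

noncomputable def fourierDataFit {ι : Type*} (α : ℝ) (y : ι → ℝ) (w : ι → ℂ) : ι → ℂ :=
  ((1 - α : ℝ) : ℂ) • w + ((α : ℝ) : ℂ) • fun k => ((y k : ℝ) : ℂ) * (w k / ((‖w k‖ : ℝ) : ℂ))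

theorem injOn_fourierDataFit {ι : Type*} {α : ℝ} (hα : α ∈ Set.Ioo (0 : ℝ) 1) {y : ι → ℝ}
    (hy : ∀ k, 0 ≤ y k) : Set.InjOn (fourierDataFit α y) {w | ∀ k, w k ≠ 0} := by
  intro w₁ hw₁ w₂ hw₂ h
  funext k
  refine Complex.injOn_ofReal_mul_add_ofReal_mul_div_norm (a := 1 - α) (b := α * y k)
    (by linarith [hα.2]) (mul_nonneg hα.1.le (hy k)) (hw₁ k) (hw₂ k) ?_
  have hk := congrFun h k
  simp only [fourierDataFit, Pi.add_apply, Pi.smul_apply, smul_eq_mul] at hk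
  push_cast at hk ⊢
  linear_combination hk

theorem diagonal_mul_diagonal_inv {ι K : Type*} [Fintype ι] [DecidableEq ι] [Field K]
    {d : ι → K} (hd : ∀ k, d k ≠ 0) : diagonal d * diagonal (fun k => (d k)⁻¹) = 1 := by
  rw [diagonal_mul_diagonal]
  simp only [mul_inv_cancel₀ (hd _), diagonal_one]

theorem pmace_data_fitting_agent_injective
    (n : ℕ)
    (F : Matrix (Fin n) (Fin n) ℂ)
    (hF : F * Fᴴ = 1 ∧ Fᴴ * F = 1)
    (d : Fin n → ℂ) (hd : ∀ k, d k ≠ 0)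
    (y : Fin n → ℝ) (hy : ∀ k, 0 ≤ y k)
    (α : ℝ) (hα : α ∈ Set.Ioo (0 : ℝ) 1)
    (Φ : (Fin n → ℂ) → (Fin n → ℂ))
    (hΦ : ∀ v, Φ v =
      ((1 - α : ℝ) : ℂ) • v +
        ((α : ℝ) : ℂ) •
          (Matrix.diagonal (fun k => (d k)⁻¹) *ᵥ
            (Fᴴ *ᵥ
              fun k =>
                ((y k : ℝ) : ℂ) *
                  ((F *ᵥ (Matrix.diagonal d *ᵥ v)) k /
                    ((‖(F *ᵥ (Matrix.diagonal d *ᵥ v)) k‖ : ℝ) : ℂ))))) :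
    Set.InjOn Φ {v | ∀ k, (F *ᵥ (Matrix.diagonal d *ᵥ v)) k ≠ 0} := by
  set L : (Fin n → ℂ) → (Fin n → ℂ) := fun v => F *ᵥ (diagonal d *ᵥ v)
  have hL : Function.Injective L :=
    (mulVec_injective_of_isUnit ⟨⟨F, Fᴴ, hF.1, hF.2⟩, rfl⟩).comp
      (mulVec_injective_of_isUnit (isUnit_diagonal.2 (Pi.isUnit_iff.2 fun k => (hd k).isUnit)))
  have hL_right_inv (w : Fin n → ℂ) :
      F *ᵥ (diagonal d *ᵥ (diagonal (fun k => (d k)⁻¹) *ᵥ (Fᴴ *ᵥ w))) = w := by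
    rw [mulVec_mulVec (M := diagonal d), diagonal_mul_diagonal_inv hd, one_mulVec,
      mulVec_mulVec, hF.1, one_mulVec]
  have hLΦ : L ∘ Φ = fourierDataFit α y ∘ L := by
    funext v
    simp only [Function.comp_apply, hΦ v, L, mulVec_add, mulVec_smul]
    rw [hL_right_inv]
    rfl
  have hLΦ_inj : Set.InjOn (L ∘ Φ) {v | ∀ k, L v k ≠ 0} := by
    rw [hLΦ]
    exact (injOn_fourierDataFit hα hy).comp hL.injOn fun _ hv => hv
  exact hLΦ_inj.of_comp
end

section
/- Given maps F_j with set-valued inverses F_j^{-1}, define V(x) = Σ_j P_j^T W (P_j x - F_j^{-1}(P_j x)). Then x* = x̄(v*) for a PMACE solution v* (i.e., F(v*) = G^P(v*)) if and only if 0 ∈ V(x*), where v_j* ∈ F_j^{-1}(P_j x*). -/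
open Matrix

theorem pmace_solution_iff_zero_in_vector_field
    (J N n : ℕ)
    (P : Fin J → Matrix (Fin n) (Fin N) ℝ)
    (hP : ∀ j, P j * (P j)ᵀ = 1)
    (W : Matrix (Fin n) (Fin n) ℝ) (hWsymm : W.IsSymm) (hWpos : W.PosDef)
    (Λ : Matrix (Fin N) (Fin N) ℝ)
    (hΛ : Λ = ∑ j, (P j)ᵀ * W * P j)
    (hΛinv : IsUnit Λ.det)
    (xbar : (Fin J → Fin n → ℝ) → (Fin N → ℝ))
    (hxbar : ∀ v, xbar v = Λ⁻¹ *ᵥ ∑ j, (P j)ᵀ *ᵥ (W *ᵥ v j))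
    (F : Fin J → (Fin n → ℝ) → (Fin n → ℝ))
    (xs : Fin N → ℝ) :
    (∃ v : Fin J → Fin n → ℝ,
        (∀ j, F j (v j) = P j *ᵥ xbar v) ∧ xs = xbar v) ↔
      (∃ v : Fin J → Fin n → ℝ,
        (∀ j, F j (v j) = P j *ᵥ xs) ∧
          ∑ j, (P j)ᵀ *ᵥ (W *ᵥ (P j *ᵥ xs - v j)) = 0) := by
  have hmul : ∀ x : Fin N → ℝ,
      Λ *ᵥ x = ∑ j, (P j)ᵀ *ᵥ (W *ᵥ (P j *ᵥ x)) := by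
    intro x
    rw [hΛ]
    refine (map_sum (AddMonoidHom.mk' (fun A : Matrix (Fin N) (Fin N) ℝ => A *ᵥ x)
      (fun A B => Matrix.add_mulVec A B x)) _ Finset.univ).trans ?_
    refine Finset.sum_congr rfl fun j _ => ?_
    simp [mulVec_mulVec, Matrix.mul_assoc]
  have hsplit : ∀ v : Fin J → Fin n → ℝ,
      ∑ j, (P j)ᵀ *ᵥ (W *ᵥ (P j *ᵥ xs - v j))
        = Λ *ᵥ xs - ∑ j, (P j)ᵀ *ᵥ (W *ᵥ v j) := by
    intro v
    rw [hmul, ← Finset.sum_sub_distrib]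
    refine Finset.sum_congr rfl fun j _ => ?_
    rw [Matrix.mulVec_sub, Matrix.mulVec_sub]
  constructor
  · rintro ⟨v, hF, hxs⟩
    refine ⟨v, fun j => by rw [hF, hxs], ?_⟩
    rw [hsplit, sub_eq_zero]
    have : xs = Λ⁻¹ *ᵥ ∑ j, (P j)ᵀ *ᵥ (W *ᵥ v j) := by rw [hxs, hxbar]
    rw [this, mulVec_mulVec, Matrix.mul_nonsing_inv _ hΛinv, one_mulVec]
  · rintro ⟨v, hF, hz⟩
    have hΛxs : Λ *ᵥ xs = ∑ j, (P j)ᵀ *ᵥ (W *ᵥ v j) := by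
      have := hz
      rw [hsplit, sub_eq_zero] at this
      exact this
    have hxv : xbar v = xs := by
      rw [hxbar, ← hΛxs, mulVec_mulVec, Matrix.nonsing_inv_mul _ hΛinv, one_mulVec]
    exact ⟨v, fun j => by rw [hF, hxv], hxv.symm⟩
end
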